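/- The multiplicative semigroup (under tropical product ⊗) generated by tropical adjacency matrices A_1,…,A_m contains the all-zero matrix 𝟎 if and only if the union graph ⋃_{r=1}^m G(A_r) is strongly connected. -/

import Mathlib

open Finset

/-- Square matrices over the binary tropical semiring `{0, -∞} ⊆ ℝ ∪ {-∞}`,
modeled with entries in `WithBot ℝ` (where `⊥` plays the role of `-∞`). -/
abbrev TMat (N : ℕ) := Matrix (Fin N) (Fin N) (WithBot ℝ)

/-- A tropical adjacency matrix: all entries in `{0, -∞}` and zero diagonal. -/
def IsTropAdj {N : ℕ} (A : TMat N) : Prop :=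
  (∀ i j, A i j = 0 ∨ A i j = ⊥) ∧ ∀ i, A i i = 0

/-- Tropical matrix product: `(A ⊗ B) i j = max_l (A i l + B l j)`. -/
def tropMul {N : ℕ} (A B : TMat N) : TMat N :=
  fun i j => Finset.univ.sup fun l => A i l + B l j

/-- The tropical identity matrix (`0` on the diagonal, `-∞` off it). -/
def tropId (N : ℕ) : TMat N := fun i j => if i = j then 0 else ⊥

/-- `k`-fold tropical power. -/
def tropPow {N : ℕ} (A : TMat N) : ℕ → TMat N
  | 0 => tropId N
  | k + 1 => tropMul A (tropPow A k)

/-- The all-zero tropical matrix `𝟎`. -/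
def zeroMat (N : ℕ) : TMat N := fun _ _ => 0

/-- Tropical matrix-vector product for a real vector: `(A ⊗ x) i = max_j (A i j + x j)`. -/
def tropMulVec {N : ℕ} (A : TMat N) (x : Fin N → ℝ) (i : Fin N) : WithBot ℝ :=
  Finset.univ.sup fun j => A i j + (x j : WithBot ℝ)

/-- The maximum of the entries of a real vector, viewed in `WithBot ℝ`. -/
def maxVal {N : ℕ} (x : Fin N → ℝ) : WithBot ℝ :=
  Finset.univ.sup fun j => (x j : WithBot ℝ)

/-- The edge relation of the dependency graph `G(A)`:
`Edge A i j` means there is an edge `i → j`, i.e. `A j i = 0`. -/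
def Edge {N : ℕ} (A : TMat N) (i j : Fin N) : Prop := A j i = 0

/-- Strong connectivity of a digraph on `Fin N` given by its edge relation. -/
def StronglyConnected {N : ℕ} (E : Fin N → Fin N → Prop) : Prop :=
  ∀ i j, Relation.ReflTransGen E i j

/-- `walkLe E k i j`: there is a directed walk from `i` to `j` of length at most `k`. -/
def walkLe {N : ℕ} (E : Fin N → Fin N → Prop) : ℕ → Fin N → Fin N → Prop
  | 0 => Eq
  | k + 1 => fun i j => walkLe E k i j ∨ ∃ l, E i l ∧ walkLe E k l j

open Relation

/-!
Over `{0, -∞}` the tropical product composes zero patterns: `(M ⊗ B) i j = 0` iff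
`M i k = 0` and `B k j = 0` for some `k`. Hence a zero entry `(i, j)` of a word
`A_{r_1} ⊗ ⋯ ⊗ A_{r_n}` is a walk from `j` to `i` in the union graph, taking its steps in
`G(A_{r_n}), …, G(A_{r_1})` in turn; this gives one direction. Conversely, every pair `(i, j)`
has its own word with a zero at `(i, j)`. Since all diagonals are zero, a zero entry of a word
survives when the word is extended on either side, so the concatenation of the words of all
pairs evaluates to `𝟎`.
-/

variable {N m : ℕ}

def IsBinary (M : TMat N) : Prop := ∀ i j, M i j = 0 ∨ M i j = ⊥

lemma tropId_apply_eq_zero_iff {i j : Fin N} : tropId N i j = 0 ↔ i = j := by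
  by_cases h : i = j <;> simp [tropId, h]

lemma tropMul_apply_eq_zero_iff {M B : TMat N} (hM : IsBinary M) (hB : IsBinary B)
    (i j : Fin N) : tropMul M B i j = 0 ↔ ∃ k, M i k = 0 ∧ B k j = 0 := by
  have hle : ∀ k, M i k + B k j ≤ 0 := fun k => by
    rcases hM i k with h | h <;> rcases hB k j with h' | h' <;> simp [h, h']
  constructor
  · intro h
    obtain ⟨k, -, hk⟩ := Finset.exists_mem_eq_sup univ
      (univ_nonempty_iff.mpr ⟨i⟩) fun l => M i l + B l j
    have hsum : M i k + B k j = 0 := hk ▸ h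
    refine ⟨k, ?_⟩
    rcases hM i k with h₁ | h₁ <;> rcases hB k j with h₂ | h₂ <;> simp_all
  · rintro ⟨k, h₁, h₂⟩
    refine le_antisymm (Finset.sup_le fun l _ => hle l) ?_
    calc (0 : WithBot ℝ) = M i k + B k j := by simp [h₁, h₂]
      _ ≤ tropMul M B i j := Finset.le_sup (f := fun l => M i l + B l j) (mem_univ k)

lemma IsBinary.tropMul {M B : TMat N} (hM : IsBinary M) (hB : IsBinary B) :
    IsBinary (tropMul M B) := by
  intro i j
  by_cases h : ∃ k, M i k = 0 ∧ B k j = 0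
  · exact .inl ((tropMul_apply_eq_zero_iff hM hB i j).mpr h)
  · refine .inr (Finset.sup_eq_bot_iff _ _ |>.mpr fun k _ => ?_)
    rcases hM i k with h₁ | h₁
    · rcases hB k j with h₂ | h₂
      · exact absurd ⟨k, h₁, h₂⟩ h
      · simp [h₂]
    · simp [h₁]

lemma isBinary_tropId : IsBinary (tropId N) := by
  intro i j
  by_cases h : i = j <;> simp [tropId, h]

lemma isTropAdj_tropId : IsTropAdj (tropId N) :=
  ⟨isBinary_tropId, fun _ => tropId_apply_eq_zero_iff.mpr rfl⟩

lemma IsTropAdj.tropMul {M B : TMat N} (hM : IsTropAdj M) (hB : IsTropAdj B) :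
    IsTropAdj (tropMul M B) :=
  ⟨IsBinary.tropMul hM.1 hB.1,
    fun i => (tropMul_apply_eq_zero_iff hM.1 hB.1 i i).mpr ⟨i, hM.2 i, hB.2 i⟩⟩

def wordProd (A : Fin m → TMat N) (l : List (Fin m)) : TMat N :=
  (l.map A).foldr tropMul (tropId N)

section wordProd

variable {A : Fin m → TMat N}

lemma isBinary_wordProd (hA : ∀ r, IsBinary (A r)) (l : List (Fin m)) :
    IsBinary (wordProd A l) := by
  induction l with
  | nil => exact isBinary_tropId
  | cons r l ih => exact (hA r).tropMul ih

lemma isTropAdj_wordProd (hA : ∀ r, IsTropAdj (A r)) (l : List (Fin m)) :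
    IsTropAdj (wordProd A l) := by
  induction l with
  | nil => exact isTropAdj_tropId
  | cons r l ih => exact IsTropAdj.tropMul (hA r) ih

lemma wordProd_cons_apply_eq_zero_iff (hA : ∀ r, IsBinary (A r)) (r : Fin m)
    (l : List (Fin m)) (i j : Fin N) :
    wordProd A (r :: l) i j = 0 ↔ ∃ k, A r i k = 0 ∧ wordProd A l k j = 0 :=
  tropMul_apply_eq_zero_iff (hA r) (isBinary_wordProd hA l) i j

lemma reflTransGen_of_wordProd_apply_eq_zero (hA : ∀ r, IsBinary (A r)) {l : List (Fin m)}
    {i j : Fin N} (h : wordProd A l i j = 0) :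
    ReflTransGen (fun a b => ∃ r, Edge (A r) a b) j i := by
  induction l generalizing i with
  | nil => rw [tropId_apply_eq_zero_iff.mp h]
  | cons r l ih =>
    obtain ⟨k, hik, hkj⟩ := (wordProd_cons_apply_eq_zero_iff hA r l i j).mp h
    exact (ih hkj).tail ⟨r, hik⟩

lemma exists_wordProd_apply_eq_zero_of_reflTransGen (hA : ∀ r, IsBinary (A r)) {i j : Fin N}
    (h : ReflTransGen (fun a b => ∃ r, Edge (A r) a b) j i) :
    ∃ l, wordProd A l i j = 0 := by
  induction h with
  | refl => exact ⟨[], tropId_apply_eq_zero_iff.mpr rfl⟩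
  | @tail b c _ hbc ih =>
    obtain ⟨l, hl⟩ := ih
    obtain ⟨r, hr⟩ := hbc
    exact ⟨r :: l, (wordProd_cons_apply_eq_zero_iff hA r l c j).mpr ⟨b, hr, hl⟩⟩

lemma wordProd_append_apply_eq_zero (hA : ∀ r, IsBinary (A r)) {l₁ l₂ : List (Fin m)}
    {i k j : Fin N} (h₁ : wordProd A l₁ i k = 0) (h₂ : wordProd A l₂ k j = 0) :
    wordProd A (l₁ ++ l₂) i j = 0 := by
  induction l₁ generalizing i with
  | nil => rwa [List.nil_append, tropId_apply_eq_zero_iff.mp h₁]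
  | cons r l₁ ih =>
    obtain ⟨k', hik', hk'k⟩ := (wordProd_cons_apply_eq_zero_iff hA r l₁ i k).mp h₁
    exact (wordProd_cons_apply_eq_zero_iff hA r _ i j).mpr ⟨k', hik', ih hk'k⟩

lemma wordProd_apply_eq_zero_of_infix (hA : ∀ r, IsTropAdj (A r)) {l₁ l₂ : List (Fin m)}
    (hl : l₁ <:+: l₂) {i j : Fin N} (h : wordProd A l₁ i j = 0) : wordProd A l₂ i j = 0 := by
  obtain ⟨s, t, rfl⟩ := hl
  have hA' : ∀ r, IsBinary (A r) := fun r => (hA r).1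
  exact wordProd_append_apply_eq_zero hA'
    (wordProd_append_apply_eq_zero hA' ((isTropAdj_wordProd hA s).2 i) h)
    ((isTropAdj_wordProd hA t).2 j)

end wordProd

/-- The multiplicative semigroup (under `⊗`) generated by `A_1, …, A_m` contains `𝟎`
iff the union graph `⋃ G(A_r)` is strongly connected. -/
theorem semigroup_contains_zeroMat_iff_union_stronglyConnected {N m : ℕ} (hm : 1 ≤ m)
    (A : Fin m → TMat N) (hA : ∀ r, IsTropAdj (A r)) :
    (∃ l : List (Fin m), l ≠ [] ∧ (l.map A).foldr tropMul (tropId N) = zeroMat N) ↔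
    StronglyConnected (fun i j => ∃ r, Edge (A r) i j) := by
  have hA' : ∀ r, IsBinary (A r) := fun r => (hA r).1
  constructor
  · rintro ⟨l, -, hl⟩ i j
    exact reflTransGen_of_wordProd_apply_eq_zero hA' (l := l) (congrFun (congrFun hl j) i)
  · intro hsc
    choose w hw using fun i j => exists_wordProd_apply_eq_zero_of_reflTransGen hA' (hsc j i)
    let word := (List.finRange N ×ˢ List.finRange N).flatMap fun p => w p.1 p.2
    have hinfix : ∀ i j, w i j <:+: ⟨0, hm⟩ :: word := fun i j =>
      (List.infix_of_mem_flatten (List.mem_map_of_mem (f := fun p => w p.1 p.2)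
        (List.mem_product.mpr ⟨List.mem_finRange i, List.mem_finRange j⟩))).trans
        (List.suffix_cons _ _).isInfix
    exact ⟨_, List.cons_ne_nil _ _,
      funext₂ fun i j => wordProd_apply_eq_zero_of_infix hA (hinfix i j) (hw i j)⟩
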